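/- For every perfect tree T ⊆ 2^{<ω} and every N ∈ ω, the set {⟨a,w⟩ ∈ Q⊚ : there is n ≥ N with a ∩ T ∩ 2^n ≠ ∅} is dense in Q⊚. -/
import Mathlib


/-- Restriction `η↾l` of `η ∈ 2^ω` to its first `l` entries, as a finite binary sequence. -/
def restrict (η : ℕ → Bool) (l : ℕ) : List Bool := List.ofFn (fun i : Fin l => η i)

/-- Conditions of the forcing notion `Q⊚`: pairs `⟨a, w⟩` with `a` a finite set of
finite binary sequences and `w` a finite set of elements of Cantor space. -/
abbrev QCirc : Type := Finset (List Bool) × Finset (ℕ → Bool)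

/-- The order of `Q⊚` (a stronger condition is the greater one). -/
def QCirc.le (p q : QCirc) : Prop :=
  p.1 ⊆ q.1 ∧ p.2 ⊆ q.2 ∧
    ∀ η ∈ p.2, ∀ l : ℕ, restrict η l ∈ q.1 → restrict η l ∈ p.1

/-- Compatibility in a forcing notion: a common upper bound exists. -/
def PCompat {P : Type} (le : P → P → Prop) (p q : P) : Prop :=
  ∃ r, le p r ∧ le q r


/-- A set `D` is dense in a forcing notion if every condition has an upper bound in `D`. -/
def PDense {P : Type} (le : P → P → Prop) (D : Set P) : Prop :=
  ∀ p : P, ∃ q ∈ D, le p q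

/-- `T ⊆ 2^{<ω}` is a tree: it is closed under initial segments. -/
def IsTree (T : Set (List Bool)) : Prop :=
  ∀ μ ∈ T, ∀ ν : List Bool, ν <+: μ → ν ∈ T

/-- A perfect tree: a nonempty tree in which every node has two incomparable extensions. -/
def PerfectTree (T : Set (List Bool)) : Prop :=
  IsTree T ∧ T.Nonempty ∧
    ∀ ν ∈ T, ∃ μ₁ ∈ T, ∃ μ₂ ∈ T,
      ν <+: μ₁ ∧ ν <+: μ₂ ∧ ¬ μ₁ <+: μ₂ ∧ ¬ μ₂ <+: μ₁


lemma restrict_length' (η : ℕ → Bool) (l : ℕ) : (restrict η l).length = l := by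
  simp [restrict]

lemma restrict_take' (η : ℕ → Bool) {k m : ℕ} (h : k ≤ m) :
    (restrict η m).take k = restrict η k := by
  apply List.ext_getElem
  · simp [restrict, h]
  · intro i h1 h2
    simp [restrict, List.getElem_take]

lemma avoid_mono' {μ μ' : List Bool} {η : ℕ → Bool} (h : μ <+: μ')
    (ha : μ ≠ restrict η μ.length) : μ' ≠ restrict η μ'.length := by
  intro he
  apply ha
  have hl := h.length_le
  have ht : μ'.take μ.length = μ := (List.prefix_iff_eq_take.mp h).symm
  rw [he] at ht
  rw [restrict_take' η hl] at ht
  exact ht.symm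

lemma perfect_grow {T : Set (List Bool)} (hT : PerfectTree T) :
    ∀ k : ℕ, ∀ ν ∈ T, ∃ μ ∈ T, ν <+: μ ∧ k ≤ μ.length := by
  intro k
  induction k with
  | zero => exact fun ν hν => ⟨ν, hν, List.prefix_refl ν, Nat.zero_le _⟩
  | succ k ih =>
    intro ν hν
    obtain ⟨μ, hμT, hpre, hlen⟩ := ih ν hν
    obtain ⟨μ₁, hμ₁, μ₂, hμ₂, h1, h2, h12, h21⟩ := hT.2.2 μ hμT
    refine ⟨μ₁, hμ₁, hpre.trans h1, ?_⟩
    have hne : μ ≠ μ₁ := by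
      rintro rfl; exact h12 h2
    have : μ.length < μ₁.length :=
      lt_of_le_of_ne h1.length_le (fun he => hne (h1.eq_of_length he))
    omega

lemma perfect_avoid {T : Set (List Bool)} (hT : PerfectTree T) (w : Finset (ℕ → Bool)) :
    ∀ ν ∈ T, ∃ μ ∈ T, ν <+: μ ∧ ∀ η ∈ w, restrict η μ.length ≠ μ := by
  classical
  induction w using Finset.induction with
  | empty => exact fun ν hν => ⟨ν, hν, List.prefix_refl ν, by simp⟩
  | @insert η w hη ih =>
    intro ν hν
    obtain ⟨μ, hμT, hpre, havoid⟩ := ih ν hν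
    obtain ⟨μ₁, hμ₁, μ₂, hμ₂, h1, h2, h12, h21⟩ := hT.2.2 μ hμT
    have key : μ₁ ≠ restrict η μ₁.length ∨ μ₂ ≠ restrict η μ₂.length := by
      by_contra hc
      push_neg at hc
      obtain ⟨e1, e2⟩ := hc
      rcases le_total μ₁.length μ₂.length with hle | hle
      · apply h12
        rw [e1, e2, ← restrict_take' η hle]
        exact List.take_prefix _ _
      · apply h21
        rw [e1, e2, ← restrict_take' η hle]
        exact List.take_prefix _ _
    rcases key with hk | hk
    · refine ⟨μ₁, hμ₁, hpre.trans h1, ?_⟩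
      intro η' hη'
      rcases Finset.mem_insert.mp hη' with rfl | hmem
      · exact fun he => hk he.symm
      · exact fun he => (avoid_mono' h1 (fun he2 => havoid η' hmem he2.symm)) he.symm
    · refine ⟨μ₂, hμ₂, hpre.trans h2, ?_⟩
      intro η' hη'
      rcases Finset.mem_insert.mp hη' with rfl | hmem
      · exact fun he => hk he.symm
      · exact fun he => (avoid_mono' h2 (fun he2 => havoid η' hmem he2.symm)) he.symm

/-- For every perfect tree `T ⊆ 2^{<ω}` and `N ∈ ω`, the set of conditions `⟨a,w⟩` of `Q⊚`
such that `a ∩ T ∩ 2^n ≠ ∅` for some `n ≥ N` is dense in `Q⊚`. -/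
theorem qcirc_hits_perfect_tree_dense (T : Set (List Bool)) (hT : PerfectTree T) (N : ℕ) :
    PDense QCirc.le
      {p : QCirc | ∃ n ≥ N, ∃ ν ∈ p.1, ν ∈ T ∧ ν.length = n} := by
  rintro ⟨a, w⟩
  obtain ⟨ν₀, hν₀⟩ := hT.2.1
  obtain ⟨μ₀, hμ₀T, _, hμ₀len⟩ := perfect_grow hT N ν₀ hν₀
  obtain ⟨μ, hμT, hμpre, hμavoid⟩ := perfect_avoid hT w μ₀ hμ₀T
  refine ⟨(insert μ a, w), ⟨μ.length, le_trans hμ₀len hμpre.length_le,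
    μ, Finset.mem_insert_self μ a, hμT, rfl⟩, ?_, le_refl w, ?_⟩
  · exact Finset.subset_insert μ a
  · intro η hη l hl
    rcases Finset.mem_insert.mp hl with he | hmem
    · exfalso
      have : l = μ.length := by rw [← restrict_length' η l, he]
      exact hμavoid η hη (this ▸ he)
    · exact hmem
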